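/- Let 𝔩 be the F₈-Lie algebra with brackets [E₀,E₁] = αE₂, [E₀,E₂] = αE₁, [E₁,E₂] = -2αE₀ and the standard B-metric g. Then R(E₀,E₁,E₀,E₁) = α², R(E₀,E₂,E₀,E₂) = -α², R(E₁,E₂,E₁,E₂) = α², the scalar curvature is τ = -2α², and the Ricci tensor satisfies ρ = τ·(η⊗η) where η = E₀*. -/

import Mathlib

/-! Since `g` is nondegenerate, the Koszul formula determines the connection, and the explicit
bilinear map `nablaF8` satisfies it; so `∇ = nablaF8`, whose curvature is a polynomial in the
coordinates, and every component of `R`, `ρ` and `τ` is read off from it. -/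

noncomputable section

/-- Standard basis of ℝ³. -/
def E3 (i : Fin 3) : Fin 3 → ℝ := Pi.single i 1

/-- The B-metric g with g(e₀,e₀)=g(e₁,e₁)=1, g(e₂,e₂)=-1, off-diagonal zero. -/
def gB (x y : Fin 3 → ℝ) : ℝ := x 0 * y 0 + x 1 * y 1 - x 2 * y 2

/-- The endomorphism φ: φe₀ = 0, φe₁ = e₂, φe₂ = -e₁. -/
def phi3 (x : Fin 3 → ℝ) : Fin 3 → ℝ := ![0, -x 2, x 1]

/-- The 1-form η = e₀*. -/
def eta3 (x : Fin 3 → ℝ) : ℝ := x 0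
/-- Curvature tensor R(x,y)z = ∇ₓ∇ᵧz - ∇ᵧ∇ₓz - ∇_{[x,y]}z of a bilinear connection. -/
def curv (nabla : (Fin 3 → ℝ) →ₗ[ℝ] (Fin 3 → ℝ) →ₗ[ℝ] (Fin 3 → ℝ))
    (br : (Fin 3 → ℝ) → (Fin 3 → ℝ) → (Fin 3 → ℝ)) (x y z : Fin 3 → ℝ) : Fin 3 → ℝ :=
  nabla x (nabla y z) - nabla y (nabla x z) - nabla (br x y) z

/-- Curvature components R(Eᵢ,Eⱼ,Eₖ,Eₗ) = g(R(Eᵢ,Eⱼ)Eₖ, Eₗ). -/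
def Rc (nabla : (Fin 3 → ℝ) →ₗ[ℝ] (Fin 3 → ℝ) →ₗ[ℝ] (Fin 3 → ℝ))
    (br : (Fin 3 → ℝ) → (Fin 3 → ℝ) → (Fin 3 → ℝ)) (i j k l : Fin 3) : ℝ :=
  gB (curv nabla br (E3 i) (E3 j) (E3 k)) (E3 l)

/-- Ricci tensor ρⱼₖ = R₀ⱼₖ₀ + R₁ⱼₖ₁ - R₂ⱼₖ₂. -/
def ricci (nabla : (Fin 3 → ℝ) →ₗ[ℝ] (Fin 3 → ℝ) →ₗ[ℝ] (Fin 3 → ℝ))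
    (br : (Fin 3 → ℝ) → (Fin 3 → ℝ) → (Fin 3 → ℝ)) (j k : Fin 3) : ℝ :=
  Rc nabla br 0 j k 0 + Rc nabla br 1 j k 1 - Rc nabla br 2 j k 2

/-- Scalar curvature τ = ρ₀₀ + ρ₁₁ - ρ₂₂. -/
def scal (nabla : (Fin 3 → ℝ) →ₗ[ℝ] (Fin 3 → ℝ) →ₗ[ℝ] (Fin 3 → ℝ))
    (br : (Fin 3 → ℝ) → (Fin 3 → ℝ) → (Fin 3 → ℝ)) : ℝ :=
  ricci nabla br 0 0 + ricci nabla br 1 1 - ricci nabla br 2 2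

/-- The F₈-bracket: [E₀,E₁] = αE₂, [E₀,E₂] = αE₁, [E₁,E₂] = -2αE₀. -/
def brF8 (α : ℝ) (x y : Fin 3 → ℝ) : Fin 3 → ℝ :=
  ![-2 * α * (x 1 * y 2 - x 2 * y 1),
    α * (x 0 * y 2 - x 2 * y 0),
    α * (x 0 * y 1 - x 1 * y 0)]

/-- The Koszul formula on a basis of a Lie algebra with a left-invariant metric, where the
derivative terms vanish. -/
def IsKoszul (br : (Fin 3 → ℝ) → (Fin 3 → ℝ) → (Fin 3 → ℝ))
    (nabla : (Fin 3 → ℝ) →ₗ[ℝ] (Fin 3 → ℝ) →ₗ[ℝ] (Fin 3 → ℝ)) : Prop :=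
  ∀ i j k : Fin 3, 2 * gB (nabla (E3 i) (E3 j)) (E3 k) =
    gB (br (E3 i) (E3 j)) (E3 k) + gB (br (E3 k) (E3 i)) (E3 j) + gB (br (E3 k) (E3 j)) (E3 i)

theorem eq_of_gB_E3_eq {v w : Fin 3 → ℝ} (h : ∀ k, gB v (E3 k) = gB w (E3 k)) : v = w := by
  funext k
  have hk := h k
  fin_cases k <;> simp [gB, E3] at hk ⊢ <;> linarith

theorem IsKoszul.unique {br : (Fin 3 → ℝ) → (Fin 3 → ℝ) → (Fin 3 → ℝ)}
    {nabla nabla' : (Fin 3 → ℝ) →ₗ[ℝ] (Fin 3 → ℝ) →ₗ[ℝ] (Fin 3 → ℝ)}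
    (h : IsKoszul br nabla) (h' : IsKoszul br nabla') : nabla = nabla' :=
  LinearMap.ext_basis (Pi.basisFun ℝ (Fin 3)) (Pi.basisFun ℝ (Fin 3)) fun i j => by
    rw [Pi.basisFun_apply, Pi.basisFun_apply]
    exact (eq_of_gB_E3_eq fun k => by linarith [h i j k, h' i j k] :
      nabla (E3 i) (E3 j) = nabla' (E3 i) (E3 j))

def nablaF8 (α : ℝ) : (Fin 3 → ℝ) →ₗ[ℝ] (Fin 3 → ℝ) →ₗ[ℝ] (Fin 3 → ℝ) :=
  LinearMap.mk₂ ℝ (fun x y => ![α * (x 2 * y 1 - x 1 * y 2), -α * (x 2 * y 0), -α * (x 1 * y 0)])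
    (fun _ _ _ => by funext k; fin_cases k <;> simp <;> ring)
    (fun _ _ _ => by funext k; fin_cases k <;> simp <;> ring)
    (fun _ _ _ => by funext k; fin_cases k <;> simp <;> ring)
    (fun _ _ _ => by funext k; fin_cases k <;> simp <;> ring)

theorem isKoszul_nablaF8 (α : ℝ) : IsKoszul (brF8 α) (nablaF8 α) := by
  intro i j k
  fin_cases i <;> fin_cases j <;> fin_cases k <;> simp [nablaF8, brF8, gB, E3] <;> ring

theorem curv_nablaF8 (α : ℝ) (x y z : Fin 3 → ℝ) :
    curv (nablaF8 α) (brF8 α) x y z =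
      ![-α ^ 2 * ((x 0 * y 1 - x 1 * y 0) * z 1 - (x 0 * y 2 - x 2 * y 0) * z 2),
        α ^ 2 * ((x 2 * y 1 - x 1 * y 2) * z 2 + (x 0 * y 1 - x 1 * y 0) * z 0),
        α ^ 2 * ((x 2 * y 1 - x 1 * y 2) * z 1 + (x 0 * y 2 - x 2 * y 0) * z 0)] := by
  funext k
  fin_cases k <;> simp [curv, nablaF8, brF8] <;> ring

theorem ricci_nablaF8 (α : ℝ) (j k : Fin 3) :
    ricci (nablaF8 α) (brF8 α) j k = -2 * α ^ 2 * (eta3 (E3 j) * eta3 (E3 k)) := by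
  fin_cases j <;> fin_cases k <;> simp [ricci, Rc, curv_nablaF8, gB, eta3, E3]; ring

theorem scal_nablaF8 (α : ℝ) : scal (nablaF8 α) (brF8 α) = -2 * α ^ 2 := by
  simp [scal, ricci_nablaF8, eta3, E3]

/-- curvature of the F₈-case: τ = -2α² and ρ = τ·η⊗η. -/
theorem F8_curvature (α : ℝ)
    (nabla : (Fin 3 → ℝ) →ₗ[ℝ] (Fin 3 → ℝ) →ₗ[ℝ] (Fin 3 → ℝ))
    (hK : ∀ i j k : Fin 3, 2 * gB (nabla (E3 i) (E3 j)) (E3 k) =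
      gB (brF8 α (E3 i) (E3 j)) (E3 k) + gB (brF8 α (E3 k) (E3 i)) (E3 j)
        + gB (brF8 α (E3 k) (E3 j)) (E3 i)) :
    Rc nabla (brF8 α) 0 1 0 1 = α ^ 2 ∧ Rc nabla (brF8 α) 0 2 0 2 = -α ^ 2 ∧
    Rc nabla (brF8 α) 1 2 1 2 = α ^ 2 ∧
    scal nabla (brF8 α) = -2 * α ^ 2 ∧
    (∀ j k : Fin 3, ricci nabla (brF8 α) j k =
      scal nabla (brF8 α) * (eta3 (E3 j) * eta3 (E3 k))) := by
  obtain rfl : nabla = nablaF8 α := IsKoszul.unique hK (isKoszul_nablaF8 α)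
  refine ⟨?_, ?_, ?_, scal_nablaF8 α, fun j k => by rw [ricci_nablaF8, scal_nablaF8]⟩ <;>
    simp [Rc, curv_nablaF8, gB, E3]
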